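/- arXiv:1908.04833 — 3 statements merged into one kernel-verified Lean document; each statement's English description precedes it below -/
import Mathlib

section
/- Let p be an odd prime, let n ≥ 1 and ℓ be integers with n/2 ≤ ℓ ≤ n, and let f : ZMod p^n → ZMod p^n be a function such that for all x and t, f(x + t·p^ℓ) = f(x) + f'(x)·t·p^ℓ in ZMod p^n, where f' : ZMod p^n → ZMod p^n. Then the complete exponential sum over units x mod p^n of e(f(x)/p^n) equals the sum of e(f(x₀)/p^n) over those units x₀ mod p^n with f'(x₀) ≡ 0 mod p^{n-ℓ}. -/
/-!
Translation by `t p^ℓ` permutes the units, since `p^ℓ` is nilpotent in `ZMod p^n`. Averaging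
over all `t` therefore writes `p^n` times the sum as `∑_x e(f x / p^n) ∑_t e(f' x t p^ℓ / p^n)`,
the phase being affine in `t`; the inner character sum is `p^n` or `0` according as
`f' x p^ℓ = 0` or not, that is, as `p^(n-ℓ) ∣ f' x` or not.
-/

open Finset

theorem Units.sum_add_of_isNilpotent {R M : Type*} [CommRing R] [Fintype Rˣ] [AddCommMonoid M]
    {a : R} (ha : IsNilpotent a) (g : R → M) :
    ∑ u : Rˣ, g (u + a) = ∑ u : Rˣ, g u :=
  Fintype.sum_equiv
    { toFun := fun u => (ha.isUnit_add_left_of_commute u.isUnit (Commute.all _ _)).unit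
      invFun := fun u => (ha.neg.isUnit_add_left_of_commute u.isUnit (Commute.all _ _)).unit
      left_inv := fun u => Units.ext (by simp)
      right_inv := fun u => Units.ext (by simp) }
    _ _ fun _ => rfl

theorem ZMod.mul_natCast_eq_zero_iff {m a b : ℕ} [NeZero m] (hm : a * b = m) (hb : b ≠ 0)
    (x : ZMod m) : x * b = 0 ↔ a ∣ x.val := by
  subst hm
  rw [← ZMod.natCast_zmod_val x, ← Nat.cast_mul, ZMod.natCast_eq_zero_iff, ZMod.val_natCast_of_lt
    (ZMod.val_lt x)]
  exact Nat.mul_dvd_mul_iff_right (Nat.pos_of_ne_zero hb)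

theorem ZMod.stdAddChar_apply_eq_exp {N : ℕ} [NeZero N] (j : ZMod N) :
    ZMod.stdAddChar j = Complex.exp (2 * Real.pi * Complex.I * (j.val : ℂ) / (N : ℂ)) := by
  rw [ZMod.stdAddChar_apply, ZMod.toCircle_apply]

section StationaryPhase

variable {R : Type*} [CommRing R] [Fintype R] [DecidableEq R] {ψ : AddChar R ℂ}
  {f f' : R → R} {c : R}

theorem AddChar.sum_comp_add_mul_of_affine (hψ : ψ.IsPrimitive)
    (hT : ∀ x t, f (x + t * c) = f x + f' x * t * c) (x : R) :
    ∑ t, ψ (f (x + t * c)) = if f' x * c = 0 then ψ (f x) * Fintype.card R else 0 := by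
  simp_rw [hT, AddChar.map_add_eq_mul, ← mul_sum]
  have hshift : ∀ t, ψ (f' x * t * c) = ψ (t * (f' x * c)) := fun t => congrArg ψ (by ring)
  simp_rw [hshift, AddChar.sum_mulShift _ hψ]
  split_ifs <;> simp

theorem AddChar.sum_units_eq_sum_stationary [Fintype Rˣ] (hψ : ψ.IsPrimitive)
    (hc : IsNilpotent c) (hT : ∀ x t, f (x + t * c) = f x + f' x * t * c) :
    ∑ u : Rˣ, ψ (f u) = ∑ u ∈ univ.filter (fun u : Rˣ => f' u * c = 0), ψ (f u) := by
  have hcard : (Fintype.card R : ℂ) ≠ 0 := Nat.cast_ne_zero.mpr Fintype.card_ne_zero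
  apply mul_left_cancel₀ hcard
  calc (Fintype.card R : ℂ) * ∑ u : Rˣ, ψ (f u)
      = ∑ t : R, ∑ u : Rˣ, ψ (f (u + t * c)) := by
        rw [sum_congr rfl fun t _ => Units.sum_add_of_isNilpotent
          ((Commute.all t c).isNilpotent_mul_left hc) (fun y => ψ (f y)), sum_const, card_univ,
          nsmul_eq_mul]
    _ = ∑ u : Rˣ, if f' u * c = 0 then ψ (f u) * Fintype.card R else 0 := by
        rw [sum_comm]
        exact sum_congr rfl fun u _ => AddChar.sum_comp_add_mul_of_affine hψ hT u
    _ = (Fintype.card R : ℂ) * ∑ u ∈ univ.filter (fun u : Rˣ => f' u * c = 0), ψ (f u) := by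
        rw [sum_filter, mul_sum]
        exact sum_congr rfl fun u _ => by split_ifs <;> ring

end StationaryPhase

theorem stationary_phase_reduction_general
    (p n ℓ : ℕ) (hn : 1 ≤ n)
    (hl1 : n ≤ 2 * ℓ) (hl2 : ℓ ≤ n) [NeZero (p ^ n)]
    (f f' : ZMod (p ^ n) → ZMod (p ^ n))
    (hT : ∀ x t : ZMod (p ^ n),
      f (x + t * (p : ZMod (p ^ n)) ^ ℓ) = f x + f' x * t * (p : ZMod (p ^ n)) ^ ℓ) :
    ∑ x : (ZMod (p ^ n))ˣ,
        Complex.exp (2 * Real.pi * Complex.I * ((f x).val : ℂ) / ((p : ℂ) ^ n)) =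
    ∑ x ∈ Finset.univ.filter (fun x : (ZMod (p ^ n))ˣ => p ^ (n - ℓ) ∣ (f' x).val),
        Complex.exp (2 * Real.pi * Complex.I * ((f x).val : ℂ) / ((p : ℂ) ^ n)) := by
  have hpnil : IsNilpotent (p : ZMod (p ^ n)) := ⟨n, by exact_mod_cast ZMod.natCast_self (p ^ n)⟩
  have hc : IsNilpotent ((p : ZMod (p ^ n)) ^ ℓ) := hpnil.pow_of_pos (by omega)
  have hsplit : p ^ (n - ℓ) * p ^ ℓ = p ^ n := by rw [← pow_add, Nat.sub_add_cancel hl2]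
  have hpℓ : p ^ ℓ ≠ 0 := right_ne_zero_of_mul (hsplit ▸ NeZero.ne (p ^ n))
  have hexp : ∀ j : ZMod (p ^ n), Complex.exp (2 * Real.pi * Complex.I * (j.val : ℂ) /
      ((p : ℂ) ^ n)) = ZMod.stdAddChar j := fun j => by
    rw [ZMod.stdAddChar_apply_eq_exp, Nat.cast_pow]
  simp_rw [hexp]
  rw [AddChar.sum_units_eq_sum_stationary (ZMod.isPrimitive_stdAddChar _) hc hT]
  refine sum_congr (filter_congr fun x _ => ?_) fun _ _ => rfl
  exact_mod_cast ZMod.mul_natCast_eq_zero_iff hsplit hpℓ (f' x)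

/-- p-adic stationary phase reduction (Lemma "stationary phase"). -/
theorem stationary_phase_reduction
    (p n ℓ : ℕ) (hp : p.Prime) (hodd : Odd p) (hn : 1 ≤ n)
    (hl1 : n ≤ 2 * ℓ) (hl2 : ℓ ≤ n) [NeZero (p ^ n)]
    (f f' : ZMod (p ^ n) → ZMod (p ^ n))
    (hT : ∀ x t : ZMod (p ^ n),
      f (x + t * (p : ZMod (p ^ n)) ^ ℓ) = f x + f' x * t * (p : ZMod (p ^ n)) ^ ℓ) :
    ∑ x : (ZMod (p ^ n))ˣ,
        Complex.exp (2 * Real.pi * Complex.I * ((f x).val : ℂ) / ((p : ℂ) ^ n)) =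
    ∑ x ∈ Finset.univ.filter (fun x : (ZMod (p ^ n))ˣ => p ^ (n - ℓ) ∣ (f' x).val),
        Complex.exp (2 * Real.pi * Complex.I * ((f x).val : ℂ) / ((p : ℂ) ^ n)) :=
  stationary_phase_reduction_general p n ℓ hn hl1 hl2 f f' hT
end

section
/- Let p be an odd prime, q = p^n, χ a primitive Dirichlet character modulo q, and q̃ a divisor of q with 1 < q̃ < q. Let j, h be integers and write (j, q̃) = p^{η_j}, (h, q̃) = p^{η_h}, with η = min(η_j, η_h). If p^η ≠ q̃ and η_j = η_h = η, then K_χ(j, h; q̃) = p^{η/2}·K_χ(jh/p^{2η}; q̃/p^η), where K_χ(a,b;q̃) = q̃^{-1/2}∑*_{r mod q̃} χ(r + b(q/q̃))χ̄(r)e(ar/q̃) and K_χ(m; q̃') := K_χ(m, 1; q̃'). -/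
open Finset

/-- The complete exponential sum K_χ(a,b;p^s) of (3.8):
K_χ(a,b;q̃) = q̃^{-1/2} ∑*_{r mod q̃} χ(r + b·(q/q̃)) χ̄(r) e(ar/q̃), where q = p^n. -/
noncomputable def Kchi (p n : ℕ) (χ : DirichletCharacter ℂ (p ^ n)) (a b : ℤ) (s : ℕ) : ℂ :=
  ((Real.sqrt (p ^ s) : ℂ))⁻¹ *
    ∑ r ∈ Finset.range (p ^ s),
      if Nat.Coprime r p then
        χ ((r : ZMod (p ^ n)) + (b : ZMod (p ^ n)) * (p : ZMod (p ^ n)) ^ (n - s)) *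
          (starRingEnd ℂ) (χ (r : ZMod (p ^ n))) *
          Complex.exp (2 * Real.pi * Complex.I * (a : ℂ) * (r : ℂ) / ((p : ℂ) ^ s))
      else 0

/-!
Write `j = p^η j'` and `h = p^η h'` with `p ∤ h'`. Substituting `r ↦ h' r`, which permutes
the units mod `p^s`, turns `χ(r + h p^{n-s}) χ̄(r)` into `χ(r + p^{n-(s-η)}) χ̄(r)` (as
`χ(h') χ̄(h') = 1`) and `e(jr/p^s)` into `e(j'h'r/p^{s-η})`. The new summand has period
`p^{s-η}`, so the sum over `r mod p^s` is `p^η` times the sum over `r mod p^{s-η}`, and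
`p^η / p^{s/2} = p^{η/2} / p^{(s-η)/2}`.
-/
open Function ComplexConjugate

theorem Function.Periodic.sum_range_mul {M : Type*} [AddCommMonoid M] {f : ℕ → M} {a : ℕ}
    (hf : Periodic f a) (b : ℕ) : ∑ r ∈ range (a * b), f r = b • ∑ r ∈ range a, f r := by
  induction b with
  | zero => simp
  | succ b ih =>
    rw [Nat.mul_succ, sum_range_add, ih, succ_nsmul]
    congr 1
    refine sum_congr rfl fun x _ => ?_
    rw [add_comm, mul_comm]
    simpa using hf.nat_mul b x

theorem Function.Periodic.sum_range_comp_mul {M : Type*} [AddCommMonoid M] {f : ℕ → M}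
    {Q c : ℕ} (hf : Periodic f Q) (hc : c.Coprime Q) :
    ∑ r ∈ range Q, f (c * r) = ∑ r ∈ range Q, f r := by
  rcases Q with _ | Q
  · simp
  have sum_range_eq_sum_zmod (g : ℕ → M) :
      ∑ r ∈ range (Q + 1), g r = ∑ x : ZMod (Q + 1), g x.val :=
    (Fin.sum_univ_eq_sum_range g (Q + 1)).symm
  have hmul (x : ZMod (Q + 1)) : f (c * x.val) = f (ZMod.unitOfCoprime c hc * x).val := by
    have hcx : ((c : ZMod (Q + 1)) * x) = ((c * x.val : ℕ) : ZMod (Q + 1)) := by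
      rw [Nat.cast_mul, ZMod.natCast_zmod_val]
    rw [ZMod.coe_unitOfCoprime, hcx, ZMod.val_natCast, hf.map_mod_nat]
  simp only [sum_range_eq_sum_zmod, hmul]
  exact Equiv.sum_comp (Units.mulLeft _) fun x : ZMod (Q + 1) => f x.val

namespace DirichletCharacter

variable {N : ℕ} (χ : DirichletCharacter ℂ N)

theorem apply_mul_conj_apply_unit_mul {w : ZMod N} (hw : IsUnit w) (x y : ZMod N) :
    χ (w * x) * conj (χ (w * y)) = χ x * conj (χ y) := by
  have hw1 : χ w * conj (χ w) = 1 := by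
    rw [← RCLike.star_def, MulChar.star_apply', mul_comm, ← MulChar.mul_apply, MulChar.inv_mul,
      MulChar.one_apply hw]
  rw [map_mul, map_mul, map_mul]
  linear_combination (χ x * conj (χ y)) * hw1

theorem apply_add_mul_conj_eq_of_mul_eq_zero {x t y : ZMod N} (hx : IsUnit x)
    (hxt : IsUnit (x + t)) (hty : t * y = 0) :
    χ (x + t + y) * conj (χ (x + t)) = χ (x + y) * conj (χ x) := by
  set w := (x + t) * ↑hx.unit⁻¹
  have hxinv : x * ↑hx.unit⁻¹ = 1 := hx.mul_val_inv
  have hwx : w * x = x + t := by linear_combination (x + t) * hxinv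
  have hwxy : w * (x + y) = x + t + y := by
    linear_combination (x + t + y) * hxinv + ↑hx.unit⁻¹ * hty
  rw [← hwxy, ← hwx, χ.apply_mul_conj_apply_unit_mul (hxt.mul (Units.isUnit _))]

end DirichletCharacter

theorem Complex.exp_two_pi_I_mul_div_eq_of_modEq {Q : ℕ} {A B : ℤ} (h : A ≡ B [ZMOD Q]) :
    exp (2 * Real.pi * I * A / Q) = exp (2 * Real.pi * I * B / Q) := by
  rcases eq_or_ne Q 0 with rfl | hQ
  · simp
  have : NeZero Q := ⟨hQ⟩
  rw [← ZMod.stdAddChar_coe, ← ZMod.stdAddChar_coe, (ZMod.intCast_eq_intCast_iff _ _ _).mpr h]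

noncomputable def Kterm (p n : ℕ) (χ : DirichletCharacter ℂ (p ^ n)) (a b : ℤ) (s r : ℕ) : ℂ :=
  if Nat.Coprime r p then
    χ ((r : ZMod (p ^ n)) + (b : ZMod (p ^ n)) * (p : ZMod (p ^ n)) ^ (n - s)) *
      (starRingEnd ℂ) (χ (r : ZMod (p ^ n))) *
      Complex.exp (2 * Real.pi * Complex.I * (a : ℂ) * (r : ℂ) / ((p : ℂ) ^ s))
  else 0

section Kterm

variable {p n : ℕ} (χ : DirichletCharacter ℂ (p ^ n))

theorem Kchi_eq_sum_Kterm (a b : ℤ) (s : ℕ) :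
    Kchi p n χ a b s = ((Real.sqrt (p ^ s) : ℂ))⁻¹ * ∑ r ∈ range (p ^ s), Kterm p n χ a b s r :=
  rfl

theorem Kterm_periodic (a b : ℤ) {s : ℕ} (hs : s ≠ 0) (hsn : s ≤ n) :
    Periodic (Kterm p n χ a b s) (p ^ s) := by
  intro r
  have hcop : (r + p ^ s).Coprime p ↔ r.Coprime p := by
    rw [← Nat.sub_add_cancel (Nat.one_le_iff_ne_zero.mpr hs), pow_succ,
      Nat.coprime_add_mul_right_left]
  have hpn : (p : ZMod (p ^ n)) ^ s * (b * (p : ZMod (p ^ n)) ^ (n - s)) = 0 := by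
    rw [mul_left_comm, ← pow_add, Nat.add_sub_cancel' hsn, ← Nat.cast_pow, ZMod.natCast_self,
      mul_zero]
  unfold Kterm
  simp only [hcop]
  split_ifs with hr
  · push_cast
    congr 1
    · exact χ.apply_add_mul_conj_eq_of_mul_eq_zero
        ((ZMod.isUnit_iff_coprime r (p ^ n)).mpr (hr.pow_right n))
        (by exact_mod_cast (ZMod.isUnit_iff_coprime _ (p ^ n)).mpr ((hcop.mpr hr).pow_right n))
        hpn
    · have hexp := Complex.exp_two_pi_I_mul_div_eq_of_modEq (Q := p ^ s)
        (A := a * (r + p ^ s)) (B := a * r) (by push_cast; exact Int.add_modEq_right.mul_left a)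
      push_cast at hexp
      convert hexp using 2 <;> ring
  · rfl

theorem Kterm_pow_mul_apply_mul (hp : p ≠ 0) {η s : ℕ} (hηs : η ≤ s) (hsn : s ≤ n)
    (j' h' : ℤ) {c : ℕ} (hc : (c : ZMod (p ^ n)) = h') (hcp : c.Coprime p) (r : ℕ) :
    Kterm p n χ (p ^ η * j') (p ^ η * h') s (c * r) = Kterm p n χ (j' * h') 1 (s - η) r := by
  obtain ⟨k, rfl⟩ := Nat.exists_eq_add_of_le hηs
  rw [Nat.add_sub_cancel_left]
  have hcop : (c * r).Coprime p ↔ r.Coprime p := by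
    rw [Nat.coprime_mul_iff_left, and_iff_right hcp]
  unfold Kterm
  simp only [hcop]
  split_ifs with hr
  · congr 1
    · have harg : ((c * r : ℕ) : ZMod (p ^ n)) + ((p ^ η * h' : ℤ) : ZMod (p ^ n)) *
          (p : ZMod (p ^ n)) ^ (n - (η + k)) =
          c * ((r : ZMod (p ^ n)) + ((1 : ℤ) : ZMod (p ^ n)) * (p : ZMod (p ^ n)) ^ (n - k)) := by
        rw [show n - k = η + (n - (η + k)) by omega, pow_add]
        push_cast
        rw [hc]
        ring
      rw [harg, Nat.cast_mul, χ.apply_mul_conj_apply_unit_mul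
        ((ZMod.isUnit_iff_coprime c (p ^ n)).mpr (hcp.pow_right n))]
    · have hmod : (c : ℤ) ≡ h' [ZMOD (p ^ k : ℕ)] :=
        ((ZMod.intCast_eq_intCast_iff _ _ _).mp (by simpa using hc)).of_dvd
          (Int.natCast_dvd_natCast.mpr (pow_dvd_pow p (by omega)))
      have hexp := Complex.exp_two_pi_I_mul_div_eq_of_modEq ((hmod.mul_left j').mul_right r)
      push_cast at hexp
      convert hexp using 2 <;> push_cast
      · rw [pow_add]
        field_simp
      · ring
  · rfl

end Kterm

theorem Real.inv_sqrt_pow_mul_pow {x : ℝ} (hx : 0 < x) {η s : ℕ} (hηs : η ≤ s) :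
    (√(x ^ s))⁻¹ * x ^ η = √(x ^ η) * (√(x ^ (s - η)))⁻¹ := by
  obtain ⟨k, rfl⟩ := Nat.exists_eq_add_of_le hηs
  rw [Nat.add_sub_cancel_left, pow_add, Real.sqrt_mul (pow_nonneg hx.le η)]
  field_simp
  rw [Real.sq_sqrt (pow_nonneg hx.le η)]

theorem Int.exists_eq_pow_mul_not_dvd_of_gcd_eq {p : ℕ} (hp : p.Prime) {h : ℤ} {η s : ℕ}
    (hgcd : Int.gcd h ((p : ℤ) ^ s) = p ^ η) (hηs : η < s) :
    ∃ h', h = (p : ℤ) ^ η * h' ∧ ¬ (p : ℤ) ∣ h' := by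
  obtain ⟨h', rfl⟩ : (p : ℤ) ^ η ∣ h := by
    simpa [hgcd] using Int.gcd_dvd_left h ((p : ℤ) ^ s)
  refine ⟨h', rfl, fun hd => ?_⟩
  have hdvd : (p : ℤ) ^ (η + 1) ∣ Int.gcd ((p : ℤ) ^ η * h') ((p : ℤ) ^ s) :=
    Int.dvd_coe_gcd (pow_succ (p : ℤ) η ▸ mul_dvd_mul_left _ hd) (pow_dvd_pow _ hηs)
  rw [hgcd] at hdvd
  have := (Nat.pow_dvd_pow_iff_le_right hp.one_lt).mp (by exact_mod_cast hdvd)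
  omega

theorem Kchi_pow_mul_pow_mul {p n : ℕ} (hp : p.Prime) (χ : DirichletCharacter ℂ (p ^ n))
    {η s : ℕ} (hηs : η < s) (hsn : s ≤ n) (j' h' : ℤ) (hh' : ¬ (p : ℤ) ∣ h') :
    Kchi p n χ ((p : ℤ) ^ η * j') ((p : ℤ) ^ η * h') s =
      (Real.sqrt (p ^ η) : ℂ) * Kchi p n χ (j' * h') 1 (s - η) := by
  have : NeZero (p ^ n) := ⟨pow_ne_zero n hp.ne_zero⟩
  set c := (h' : ZMod (p ^ n)).val
  have hc : (c : ZMod (p ^ n)) = h' := ZMod.natCast_zmod_val _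
  have hcp : c.Coprime p := by
    have hmod : (c : ℤ) ≡ h' [ZMOD p] :=
      ((ZMod.intCast_eq_intCast_iff _ _ _).mp (by simpa using hc)).of_dvd
        (by exact_mod_cast dvd_pow_self p (by omega : n ≠ 0))
    rw [Nat.coprime_comm, hp.coprime_iff_not_dvd, ← Int.natCast_dvd_natCast]
    exact fun hd => hh' (hmod.dvd_iff.mp hd)
  have hper := Kterm_periodic χ (j' * h') 1 (by omega : s - η ≠ 0) (by omega)
  calc Kchi p n χ ((p : ℤ) ^ η * j') ((p : ℤ) ^ η * h') s
      = ((Real.sqrt (p ^ s) : ℂ))⁻¹ *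
          ∑ r ∈ range (p ^ (s - η) * p ^ η), Kterm p n χ (j' * h') 1 (s - η) r := by
        rw [Kchi_eq_sum_Kterm, ← pow_add, Nat.sub_add_cancel hηs.le,
          ← (Kterm_periodic χ _ _ (by omega) hsn).sum_range_comp_mul (hcp.pow_right s)]
        simp_rw [Kterm_pow_mul_apply_mul χ hp.ne_zero hηs.le hsn j' h' hc hcp]
    _ = ((Real.sqrt (p ^ s) : ℂ))⁻¹ * (p : ℂ) ^ η *
          ∑ r ∈ range (p ^ (s - η)), Kterm p n χ (j' * h') 1 (s - η) r := by
        rw [hper.sum_range_mul, nsmul_eq_mul]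
        push_cast
        ring
    _ = _ := by
        have hscale : ((Real.sqrt (p ^ s) : ℂ))⁻¹ * (p : ℂ) ^ η =
            (Real.sqrt (p ^ η) : ℂ) * ((Real.sqrt (p ^ (s - η)) : ℂ))⁻¹ := by
          exact_mod_cast Real.inv_sqrt_pow_mul_pow (x := p) (by exact_mod_cast hp.pos) hηs.le
        rw [Kchi_eq_sum_Kterm, hscale, mul_assoc]

theorem Kchi_reduction_equal_valuation_general
    (p n : ℕ) (hp : p.Prime)
    (s : ℕ) (hsn : s < n)
    (χ : DirichletCharacter ℂ (p ^ n))
    (j h : ℤ) (η : ℕ)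
    (hj : Int.gcd j ((p : ℤ) ^ s) = p ^ η)
    (hh : Int.gcd h ((p : ℤ) ^ s) = p ^ η)
    (hηs : η < s) :
    Kchi p n χ j h s =
      (Real.sqrt (p ^ η) : ℂ) * Kchi p n χ ((j * h) / ((p : ℤ) ^ (2 * η))) 1 (s - η) := by
  obtain ⟨j', rfl, -⟩ := Int.exists_eq_pow_mul_not_dvd_of_gcd_eq hp hj hηs
  obtain ⟨h', rfl, hh'⟩ := Int.exists_eq_pow_mul_not_dvd_of_gcd_eq hp hh hηs
  have hquot : (p : ℤ) ^ η * j' * ((p : ℤ) ^ η * h') / (p : ℤ) ^ (2 * η) = j' * h' := by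
    rw [show (p : ℤ) ^ η * j' * ((p : ℤ) ^ η * h') = (p : ℤ) ^ (2 * η) * (j' * h') by ring,
      Int.mul_ediv_cancel_left _ (pow_ne_zero _ (by exact_mod_cast hp.ne_zero))]
  rw [hquot, Kchi_pow_mul_pow_mul hp χ hηs hsn.le j' h' hh']

/-- First case of the reduction formula (4.1) of Lemma 4.1: if (j,q̃) = (h,q̃) = p^η
with p^η ≠ q̃ = p^s, then K_χ(j,h;q̃) = p^{η/2}·K_χ(jh/p^{2η}; q̃/p^η), where
K_χ(m;q̃') := K_χ(m,1;q̃'). -/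
theorem Kchi_reduction_equal_valuation
    (p n : ℕ) (hp : p.Prime) (hodd : Odd p)
    (s : ℕ) (hs1 : 1 ≤ s) (hsn : s < n)
    (χ : DirichletCharacter ℂ (p ^ n)) (hχ : χ.IsPrimitive)
    (j h : ℤ) (η : ℕ)
    (hj : Int.gcd j ((p : ℤ) ^ s) = p ^ η)
    (hh : Int.gcd h ((p : ℤ) ^ s) = p ^ η)
    (hηs : η < s) :
    Kchi p n χ j h s =
      (Real.sqrt (p ^ η) : ℂ) * Kchi p n χ ((j * h) / ((p : ℤ) ^ (2 * η))) 1 (s - η) :=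
  Kchi_reduction_equal_valuation_general p n hp s hsn χ j h η hj hh hηs
end

section
/- Let p be an odd prime, q = p^n, χ a primitive Dirichlet character modulo q, and q̃ = p^s a divisor of q with 1 ≤ s < n. Let j, h be integers with p-adic valuations η_j = min(ord_p j, s), η_h = min(ord_p h, s) satisfying η_j + η_h = 2s − 1 (in particular η_j ≠ η_h). Then K_χ(j, h; q̃) = −q̃^{1/2}/p, where K_χ(j,h;q̃) = q̃^{-1/2}∑*_{r mod q̃} χ(r + h(q/q̃))χ̄(r)e(jr/q̃). -/
/-!
Write `j = p^(s-1) j'` and `h = p^(s-1) h'`; the valuation condition says that exactly one of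
`j'`, `h'` is divisible by `p`. As `(p^(n-1))^2 = 0` in `ZMod (p^n)`, `ψ v = χ (1 + p^(n-1) v)` is
an additive character of `ZMod p`, nontrivial because `χ` is primitive, and the summand of `K_χ`
at a unit `r` is `ψ (h' r⁻¹) e (j' r / p)`, which only depends on `r mod p`. So `K_χ` is
`p^(s-1) / √(p^s)` times a Kloosterman sum modulo `p` with one vanishing argument, i.e. a
Ramanujan sum, which equals `-1`.
-/

open Finset

theorem sum_range_natCast_eq_sum {M : Type*} [AddCommMonoid M] (d : ℕ) [NeZero d]
    (g : ZMod d → M) : ∑ i ∈ range d, g i = ∑ v, g v :=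
  sum_nbij' (↑) ZMod.val (fun _ _ => mem_univ _) (fun v _ => mem_range.2 (ZMod.val_lt v))
    (fun _ hi => ZMod.val_cast_of_lt (mem_range.1 hi)) (fun v _ => ZMod.natCast_zmod_val v)
    (fun _ _ => rfl)

theorem sum_range_mul_natCast_eq_nsmul {M : Type*} [AddCommMonoid M] (m d : ℕ) [NeZero d]
    (g : ZMod d → M) : ∑ r ∈ range (m * d), g r = m • ∑ v, g v := by
  induction m with
  | zero => simp
  | succ m ih =>
    have hperiod : ∀ i : ℕ, g ((m * d + i : ℕ) : ZMod d) = g i := fun i => by simp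
    simp only [Nat.succ_mul, sum_range_add, ih, succ_nsmul, hperiod, sum_range_natCast_eq_sum]

namespace AddChar

theorem sum_erase_zero_eq_neg_one {A R : Type*} [AddGroup A] [Fintype A] [DecidableEq A]
    [CommRing R] [IsDomain R] {ψ : AddChar A R} (hψ : ψ ≠ 1) :
    ∑ v ∈ univ.erase 0, ψ v = -1 := by
  rw [sum_erase_eq_sub (mem_univ 0), sum_eq_zero_of_ne_one hψ, map_zero_eq_one, zero_sub]

theorem sum_erase_zero_inv_eq_neg_one {F R : Type*} [Field F] [Fintype F] [DecidableEq F]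
    [CommRing R] [IsDomain R] {ψ : AddChar F R} (hψ : ψ ≠ 1) :
    ∑ v ∈ univ.erase 0, ψ v⁻¹ = -1 := by
  rw [← sum_erase_zero_eq_neg_one hψ]
  exact sum_nbij' (·⁻¹) (·⁻¹) (by simp) (by simp) (fun v _ => inv_inv v) (fun v _ => inv_inv v)
    (fun _ _ => rfl)

theorem sum_erase_zero_inv_mul_eq_neg_one {F R : Type*} [Field F] [Fintype F] [DecidableEq F]
    [CommRing R] [IsDomain R] {ψ e : AddChar F R} (hψ : ψ ≠ 1) (he : e ≠ 1) {a b : F}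
    (hab : a = 0 ↔ b ≠ 0) :
    ∑ v ∈ univ.erase 0, ψ (a * v⁻¹) * e (b * v) = -1 := by
  by_cases ha : a = 0
  · simpa [ha] using sum_erase_zero_eq_neg_one (IsPrimitive.of_ne_one he (hab.1 ha))
  · simpa [not_not.1 (mt hab.2 ha)] using
      sum_erase_zero_inv_eq_neg_one (IsPrimitive.of_ne_one hψ ha)

end AddChar

theorem natCast_pow_pred_mul_self (p n : ℕ) : (p : ZMod (p ^ n)) ^ (n - 1) * p = 0 := by
  rw [← Nat.cast_pow, ← Nat.cast_mul, ZMod.natCast_eq_zero_iff]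
  rcases n with _ | n <;> simp [pow_succ]

noncomputable def mulPowPredHom (p n : ℕ) : ZMod p →+ ZMod (p ^ n) :=
  ZMod.lift p ⟨(AddMonoidHom.mulLeft ((p : ZMod (p ^ n)) ^ (n - 1))).comp (Int.castAddHom _), by
    simpa using natCast_pow_pred_mul_self p n⟩

theorem mulPowPredHom_intCast (p n : ℕ) (x : ℤ) :
    mulPowPredHom p n x = (p : ZMod (p ^ n)) ^ (n - 1) * x :=
  ZMod.lift_coe _ _ x

theorem pow_pred_mul_eq_mulPowPredHom (p : ℕ) {n : ℕ} (hn : n ≠ 0) (t : ZMod (p ^ n)) :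
    (p : ZMod (p ^ n)) ^ (n - 1) * t =
      mulPowPredHom p n (ZMod.castHom (dvd_pow_self p hn) (ZMod p) t) := by
  obtain ⟨k, rfl⟩ := ZMod.intCast_surjective t
  rw [map_intCast, mulPowPredHom_intCast]

theorem mulPowPredHom_mul_mulPowPredHom (p : ℕ) {n : ℕ} (hn : 2 ≤ n) (v w : ZMod p) :
    mulPowPredHom p n v * mulPowPredHom p n w = 0 := by
  obtain ⟨k, rfl⟩ := ZMod.intCast_surjective v
  obtain ⟨l, rfl⟩ := ZMod.intCast_surjective w
  have hsq : ((p : ZMod (p ^ n)) ^ (n - 1)) ^ 2 = 0 := by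
    rw [← pow_mul, show (n - 1) * 2 = (n - 1) + (n - 2) + 1 by omega, pow_succ, pow_add,
      mul_right_comm, natCast_pow_pred_mul_self, zero_mul]
  rw [mulPowPredHom_intCast, mulPowPredHom_intCast]
  linear_combination (k * l : ZMod (p ^ n)) * hsq

theorem exists_eq_one_add_mulPowPredHom_of_mem_ker {p n : ℕ} [NeZero (p ^ n)]
    (hd : p ^ (n - 1) ∣ p ^ n) {u : (ZMod (p ^ n))ˣ} (hu : u ∈ (ZMod.unitsMap hd).ker) :
    ∃ v : ZMod p, (u : ZMod (p ^ n)) = 1 + mulPowPredHom p n v := by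
  obtain ⟨a, ha⟩ : ((p ^ (n - 1) : ℕ) : ℤ) ∣ (u.val.val : ℤ) - 1 := by
    rw [MonoidHom.mem_ker, ← Units.val_inj, Units.val_one, ZMod.unitsMap_def, Units.coe_map] at hu
    have : ZMod.castHom hd (ZMod (p ^ (n - 1))) u.val =
        ((u.val.val : ℤ) : ZMod (p ^ (n - 1))) := by simp
    rwa [MonoidHom.coe_coe, this, ← Int.cast_one, eq_comm,
      ZMod.intCast_eq_intCast_iff_dvd_sub] at hu
  refine ⟨a, ?_⟩
  rw [mulPowPredHom_intCast, ← ZMod.natCast_zmod_val (u : ZMod (p ^ n))]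
  have := congrArg (Int.cast : ℤ → ZMod (p ^ n)) ha
  push_cast at this
  linear_combination this

namespace DirichletCharacter

noncomputable def topAddChar {R : Type*} [CommMonoidWithZero R] {p n : ℕ}
    (χ : DirichletCharacter R (p ^ n)) (hn : 2 ≤ n) : AddChar (ZMod p) R where
  toFun v := χ (1 + mulPowPredHom p n v)
  map_zero_eq_one' := by simp
  map_add_eq_mul' v w := by
    rw [← map_mul, (mulPowPredHom p n).map_add]
    congr 1
    linear_combination (-1 : ZMod (p ^ n)) * mulPowPredHom_mul_mulPowPredHom p hn v w

theorem topAddChar_ne_one {R : Type*} [CommMonoidWithZero R] {p n : ℕ} (hp : p.Prime)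
    {χ : DirichletCharacter R (p ^ n)} (hχ : χ.IsPrimitive) (hn : 2 ≤ n) :
    χ.topAddChar hn ≠ 1 := by
  intro hψ
  have : NeZero (p ^ n) := ⟨pow_ne_zero n hp.ne_zero⟩
  have hd : p ^ (n - 1) ∣ p ^ n := pow_dvd_pow p (Nat.sub_le n 1)
  have hfactors : χ.FactorsThrough (p ^ (n - 1)) := by
    rw [factorsThrough_iff_ker_unitsMap hd]
    intro u hu
    obtain ⟨v, hv⟩ := exists_eq_one_add_mulPowPredHom_of_mem_ker hd hu
    rw [MonoidHom.mem_ker, ← Units.val_inj, MulChar.coe_toUnitHom, Units.val_one, hv]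
    exact DFunLike.congr_fun hψ v
  have := (Nat.sInf_le (show p ^ (n - 1) ∈ χ.conductorSet from hfactors)).trans_lt
    (Nat.pow_lt_pow_right hp.one_lt (by omega : n - 1 < n))
  exact this.ne hχ

theorem apply_add_pow_pred_mul_mul_conj {p n : ℕ} [Fact p.Prime]
    (χ : DirichletCharacter ℂ (p ^ n)) (hn : 2 ≤ n) (u : (ZMod (p ^ n))ˣ) (t : ZMod (p ^ n)) :
    χ (u + (p : ZMod (p ^ n)) ^ (n - 1) * t) * starRingEnd ℂ (χ u) =
      χ.topAddChar hn (ZMod.castHom (dvd_pow_self p (by omega : n ≠ 0)) (ZMod p) t *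
        (ZMod.castHom (dvd_pow_self p (by omega : n ≠ 0)) (ZMod p) u)⁻¹) := by
  rw [← RCLike.star_def, MulChar.star_apply', MulChar.inv_apply, Ring.inverse_unit, ← map_mul,
    ← map_units_inv, ← map_mul]
  change _ = χ (1 + _)
  rw [← pow_pred_mul_eq_mulPowPredHom p (by omega), add_mul, Units.mul_inv, mul_assoc]

end DirichletCharacter

theorem le_of_int_gcd_pow_eq_pow {p s η : ℕ} (hp : p.Prime) {x : ℤ}
    (hx : Int.gcd x ((p : ℤ) ^ s) = p ^ η) : η ≤ s := by
  have : p ^ η ∣ p ^ s := by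
    rw [← hx]
    exact_mod_cast Int.gcd_dvd_right x ((p : ℤ) ^ s)
  exact (Nat.pow_dvd_pow_iff_le_right hp.one_lt).1 this

theorem pow_dvd_iff_le_of_int_gcd_pow_eq_pow {p s η k : ℕ} (hp : p.Prime) {x : ℤ}
    (hx : Int.gcd x ((p : ℤ) ^ s) = p ^ η) (hk : k ≤ s) : (p : ℤ) ^ k ∣ x ↔ k ≤ η := by
  constructor
  · intro hdvd
    have := Int.dvd_gcd hdvd (pow_dvd_pow (p : ℤ) hk)
    rw [hx] at this
    exact (Nat.pow_dvd_pow_iff_le_right hp.one_lt).1 (by exact_mod_cast this)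
  · intro hle
    exact (pow_dvd_pow (p : ℤ) hle).trans (by exact_mod_cast hx ▸ Int.gcd_dvd_left x _)

theorem exists_eq_pow_pred_mul_of_int_gcd_pow_eq_pow {p s η : ℕ} (hp : p.Prime) (hs : s ≠ 0)
    {x : ℤ} (hx : Int.gcd x ((p : ℤ) ^ s) = p ^ η) (hη : s - 1 ≤ η) :
    ∃ x' : ℤ, x = (p : ℤ) ^ (s - 1) * x' ∧ ((x' : ZMod p) = 0 ↔ s ≤ η) := by
  obtain ⟨x', rfl⟩ := (pow_dvd_iff_le_of_int_gcd_pow_eq_pow hp hx (Nat.sub_le s 1)).2 hη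
  refine ⟨x', rfl, ?_⟩
  rw [ZMod.intCast_zmod_eq_zero_iff_dvd, ← pow_dvd_iff_le_of_int_gcd_pow_eq_pow hp hx le_rfl,
    ← pow_sub_one_mul hs, mul_dvd_mul_iff_left (pow_ne_zero _ (by exact_mod_cast hp.ne_zero))]

theorem Kchi_pow_pred_mul_eq_nsmul_sum {p n s : ℕ} [Fact p.Prime] (hs1 : 1 ≤ s) (hsn : s < n)
    (χ : DirichletCharacter ℂ (p ^ n)) (j' h' : ℤ) :
    Kchi p n χ ((p : ℤ) ^ (s - 1) * j') ((p : ℤ) ^ (s - 1) * h') s =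
      ((Real.sqrt (p ^ s) : ℂ))⁻¹ * (p ^ (s - 1) • ∑ v ∈ univ.erase 0,
        χ.topAddChar (by omega) (h' * v⁻¹) * ZMod.stdAddChar ((j' : ZMod p) * v)) := by
  have hp := Fact.out (p := p.Prime)
  have hn : 2 ≤ n := by omega
  rw [Kchi, ← filter_ne', sum_filter, ← sum_range_mul_natCast_eq_nsmul,
    pow_sub_one_mul (by omega : s ≠ 0)]
  congr 1
  refine sum_congr rfl fun r _ => ?_
  have hcop : Nat.Coprime r p ↔ (r : ZMod p) ≠ 0 := by
    rw [Nat.coprime_comm, hp.coprime_iff_not_dvd, Ne, ZMod.natCast_eq_zero_iff]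
  rw [if_congr hcop rfl rfl]
  refine if_ctx_congr Iff.rfl (fun hr => ?_) fun _ => rfl
  have hexp : Complex.exp (2 * Real.pi * Complex.I * (((p : ℤ) ^ (s - 1) * j' : ℤ) : ℂ) * r /
      (p : ℂ) ^ s) = ZMod.stdAddChar ((j' : ZMod p) * (r : ZMod p)) := by
    rw [show (j' : ZMod p) * r = ((j' * r : ℤ) : ZMod p) by push_cast; rfl, ZMod.stdAddChar_coe]
    congr 1
    rw [← pow_sub_one_mul (by omega : s ≠ 0)]
    push_cast
    field_simp [hp.ne_zero]
  have hshift : (((p : ℤ) ^ (s - 1) * h' : ℤ) : ZMod (p ^ n)) * (p : ZMod (p ^ n)) ^ (n - s) =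
      (p : ZMod (p ^ n)) ^ (n - 1) * h' := by
    rw [show n - 1 = (s - 1) + (n - s) by omega, pow_add]
    push_cast
    ring
  set u := ZMod.unitOfCoprime r ((hcop.2 hr).pow_right n)
  have hu : (u : ZMod (p ^ n)) = r := ZMod.coe_unitOfCoprime _ _
  have hχ := χ.apply_add_pow_pred_mul_mul_conj hn u h'
  simp only [hu, map_natCast, map_intCast] at hχ
  rw [hexp, hshift, hχ]

theorem inv_sqrt_pow_mul_pow_pred {p s : ℕ} (hp : p ≠ 0) (hs : s ≠ 0) :
    ((Real.sqrt (p ^ s) : ℂ))⁻¹ * (p : ℂ) ^ (s - 1) = (Real.sqrt (p ^ s) : ℂ) / p := by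
  have hsqrt : ((Real.sqrt (p ^ s) : ℝ) : ℂ) ^ 2 = (p : ℂ) ^ (s - 1) * p := by
    rw [← Complex.ofReal_pow, Real.sq_sqrt (by positivity), pow_sub_one_mul hs]
    push_cast; rfl
  have hsqrt0 : ((Real.sqrt (p ^ s) : ℝ) : ℂ) ≠ 0 := by
    exact_mod_cast (Real.sqrt_pos.2 (by positivity : (0 : ℝ) < p ^ s)).ne'
  have hpC : (p : ℂ) ≠ 0 := by exact_mod_cast hp
  field_simp
  linear_combination -hsqrt

theorem Kchi_ramanujan_case_general
    (p n : ℕ) (hp : p.Prime)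
    (s : ℕ) (hs1 : 1 ≤ s) (hsn : s < n)
    (χ : DirichletCharacter ℂ (p ^ n)) (hχ : χ.IsPrimitive)
    (j h : ℤ) (ηj ηh : ℕ)
    (hj : Int.gcd j ((p : ℤ) ^ s) = p ^ ηj)
    (hh : Int.gcd h ((p : ℤ) ^ s) = p ^ ηh)
    (hsum : ηj + ηh = 2 * s - 1) :
    Kchi p n χ j h s = -(Real.sqrt (p ^ s) : ℂ) / (p : ℂ) := by
  have : Fact p.Prime := ⟨hp⟩
  have hjs := le_of_int_gcd_pow_eq_pow hp hj
  have hhs := le_of_int_gcd_pow_eq_pow hp hh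
  obtain ⟨j', rfl, hj'⟩ := exists_eq_pow_pred_mul_of_int_gcd_pow_eq_pow hp (by omega) hj (by omega)
  obtain ⟨h', rfl, hh'⟩ := exists_eq_pow_pred_mul_of_int_gcd_pow_eq_pow hp (by omega) hh (by omega)
  have hψ := χ.topAddChar_ne_one hp hχ (by omega)
  have he : ZMod.stdAddChar (N := p) ≠ 1 := by
    simpa using ZMod.isPrimitive_stdAddChar p one_ne_zero
  rw [Kchi_pow_pred_mul_eq_nsmul_sum hs1 hsn,
    AddChar.sum_erase_zero_inv_mul_eq_neg_one hψ he (by rw [hh', Ne, hj']; omega), nsmul_eq_mul,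
    mul_neg_one, mul_neg, Nat.cast_pow, inv_sqrt_pow_mul_pow_pred hp.ne_zero (by omega), neg_div]

/-- Third case of formula (4.1): if the valuations η_j, η_h (with respect to q̃ = p^s,
i.e. (j,q̃) = p^{η_j}, (h,q̃) = p^{η_h}) satisfy η_j + η_h = 2s - 1, then
K_χ(j,h;q̃) = -q̃^{1/2}/p. -/
theorem Kchi_ramanujan_case
    (p n : ℕ) (hp : p.Prime) (hodd : Odd p)
    (s : ℕ) (hs1 : 1 ≤ s) (hsn : s < n)
    (χ : DirichletCharacter ℂ (p ^ n)) (hχ : χ.IsPrimitive)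
    (j h : ℤ) (ηj ηh : ℕ)
    (hj : Int.gcd j ((p : ℤ) ^ s) = p ^ ηj)
    (hh : Int.gcd h ((p : ℤ) ^ s) = p ^ ηh)
    (hsum : ηj + ηh = 2 * s - 1) :
    Kchi p n χ j h s = -(Real.sqrt (p ^ s) : ℂ) / (p : ℂ) :=
  Kchi_ramanujan_case_general p n hp s hs1 hsn χ hχ j h ηj ηh hj hh hsum
end
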